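/- arXiv:1609.00369 — 3 statements merged into one kernel-verified Lean document; each statement's English description precedes it below -/
import Mathlib

section
/- Let g : ℝ → ℝ be a continuous bounded function with m < g(x) < M for all x, where m = inf g and M = sup g. Then for any continuous 2π-periodic function x : ℝ → ℝ and any integer n ≥ 1 and any real δ, we have |∫₀^{2π} g(x(t)) sin(nt − δ) dt| < 2(M − m). -/
open Real MeasureTheory intervalIntegral

theorem stmt3 (g : ℝ → ℝ) (hg : Continuous g) (m M : ℝ)
    (hm : m = sInf (Set.range g)) (hM : M = sSup (Set.range g))
    (hbound : ∀ x : ℝ, m < g x ∧ g x < M)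
    (x : ℝ → ℝ) (hx : Continuous x) (hxper : Function.Periodic x (2 * π))
    (n : ℕ) (hn : 1 ≤ n) (δ : ℝ) :
    |∫ t in (0:ℝ)..(2 * π), g (x t) * Real.sin (n * t - δ)| < 2 * (M - m) := by
  have hπ : (0:ℝ) < π := Real.pi_pos
  have hn0 : (n:ℝ) ≠ 0 := by positivity
  have hmM : m < M := (hbound 0).1.trans (hbound 0).2
  set c : ℝ := (m + M) / 2 with hc
  set r : ℝ := (M - m) / 2 with hr
  have hrpos : 0 < r := by simp [hr]; linarith
  have hlt : ∀ y : ℝ, |g y - c| < r := by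
    intro y
    rw [abs_lt]
    constructor <;> [linarith [(hbound y).1]; linarith [(hbound y).2]]
  -- abs of sin is periodic with period π
  have hcs : Continuous fun t : ℝ => (n:ℝ) * t - δ :=
    (continuous_const.mul continuous_id).sub continuous_const
  have habs_per : Function.Periodic (fun u : ℝ => |Real.sin u|) π := by
    intro u
    simp [Real.sin_add_pi]
  have hint_abs : ∀ t₁ t₂ : ℝ, IntervalIntegrable (fun u : ℝ => |Real.sin u|)
      MeasureSpace.volume t₁ t₂ :=
    fun t₁ t₂ => (Real.continuous_sin.abs).intervalIntegrable t₁ t₂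
  -- ∫₀^π |sin| = 2
  have hpi2 : (∫ u in (0:ℝ)..π, |Real.sin u|) = 2 := by
    rw [intervalIntegral.integral_congr (g := Real.sin) (fun u hu => by
      rw [Set.uIcc_of_le hπ.le] at hu
      exact abs_of_nonneg (Real.sin_nonneg_of_nonneg_of_le_pi hu.1 hu.2))]
    rw [integral_sin, Real.cos_pi]
    norm_num
  -- ∫₀^{2π} |sin(nt-δ)| = 4
  have habs4 : (∫ t in (0:ℝ)..(2 * π), |Real.sin (n * t - δ)|) = 4 := by
    have h1 : (∫ t in (0:ℝ)..(2 * π), |Real.sin (n * t - δ)|)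
        = (n:ℝ)⁻¹ • ∫ u in ((n:ℝ) * 0 - δ)..((n:ℝ) * (2 * π) - δ), |Real.sin u| :=
      intervalIntegral.integral_comp_mul_sub (fun u => |Real.sin u|) hn0 δ
    have h2 : ((n:ℝ) * (2 * π) - δ) = (-δ) + ((2 * n : ℤ) • π) := by
      rw [zsmul_eq_mul]
      push_cast
      ring
    rw [h1, h2, mul_zero, zero_sub,
      habs_per.intervalIntegral_add_zsmul_eq (2 * n) (-δ) hint_abs,
      habs_per.intervalIntegral_add_eq (-δ) 0, zero_add, hpi2]
    rw [zsmul_eq_mul]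
    push_cast
    field_simp
    ring_nf
    field_simp
  -- ∫₀^{2π} sin(nt-δ) = 0
  have hsin0 : (∫ t in (0:ℝ)..(2 * π), Real.sin (n * t - δ)) = 0 := by
    have h1 : (∫ t in (0:ℝ)..(2 * π), Real.sin (n * t - δ))
        = (n:ℝ)⁻¹ • ∫ u in ((n:ℝ) * 0 - δ)..((n:ℝ) * (2 * π) - δ), Real.sin u :=
      intervalIntegral.integral_comp_mul_sub Real.sin hn0 δ
    rw [h1, integral_sin, mul_zero, zero_sub]
    have : Real.cos ((n:ℝ) * (2 * π) - δ) = Real.cos (-δ) := by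
      have := (Real.cos_periodic.nat_mul n) (-δ)
      rw [show (n:ℝ) * (2 * π) - δ = -δ + (n:ℝ) * (2 * π) by ring]
      simpa using this
    rw [this]
    simp
  -- maximum of |g (x t) - c| on [0, 2π]
  obtain ⟨t₀, ht₀, hmax⟩ := (isCompact_Icc (a := (0:ℝ)) (b := 2 * π)).exists_isMaxOn
    ⟨0, by constructor <;> positivity⟩
    (((hg.comp hx).sub continuous_const).abs).continuousOn
  set B : ℝ := |g (x t₀) - c| with hB
  have hBr : B < r := hlt _
  -- integrability facts
  have hcont1 : Continuous fun t : ℝ => g (x t) * Real.sin ((n:ℝ) * t - δ) :=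
    (hg.comp hx).mul (Real.continuous_sin.comp hcs)
  have hcont2 : Continuous fun t : ℝ => (g (x t) - c) * Real.sin ((n:ℝ) * t - δ) :=
    ((hg.comp hx).sub continuous_const).mul (Real.continuous_sin.comp hcs)
  have hcontB : Continuous fun t : ℝ => B * |Real.sin ((n:ℝ) * t - δ)| :=
    continuous_const.mul ((Real.continuous_sin.comp hcs).abs)
  -- reduce to centered integrand
  have hsplit : (∫ t in (0:ℝ)..(2 * π), g (x t) * Real.sin ((n:ℝ) * t - δ))
      = ∫ t in (0:ℝ)..(2 * π), (g (x t) - c) * Real.sin ((n:ℝ) * t - δ) := by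
    have : (∫ t in (0:ℝ)..(2 * π), (g (x t) - c) * Real.sin ((n:ℝ) * t - δ))
        = (∫ t in (0:ℝ)..(2 * π), g (x t) * Real.sin ((n:ℝ) * t - δ))
          - ∫ t in (0:ℝ)..(2 * π), c * Real.sin ((n:ℝ) * t - δ) := by
      have hcont3 : Continuous fun t : ℝ => c * Real.sin ((n:ℝ) * t - δ) :=
        continuous_const.mul (Real.continuous_sin.comp hcs)
      rw [← intervalIntegral.integral_sub (hcont1.intervalIntegrable _ _)
        (hcont3.intervalIntegrable _ _)]
      congr 1
      ext t
      ring
    rw [this, intervalIntegral.integral_const_mul, hsin0, mul_zero, sub_zero]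
  have hab : (0:ℝ) ≤ 2 * π := by positivity
  calc |∫ t in (0:ℝ)..(2 * π), g (x t) * Real.sin ((n:ℝ) * t - δ)|
      = |∫ t in (0:ℝ)..(2 * π), (g (x t) - c) * Real.sin ((n:ℝ) * t - δ)| := by rw [hsplit]
    _ ≤ ∫ t in (0:ℝ)..(2 * π), |(g (x t) - c) * Real.sin ((n:ℝ) * t - δ)| :=
        intervalIntegral.abs_integral_le_integral_abs hab
    _ ≤ ∫ t in (0:ℝ)..(2 * π), B * |Real.sin ((n:ℝ) * t - δ)| := by
        apply intervalIntegral.integral_mono_on hab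
          (hcont2.abs.intervalIntegrable _ _) (hcontB.intervalIntegrable _ _)
        intro t ht
        rw [abs_mul]
        exact mul_le_mul_of_nonneg_right (hmax ht) (abs_nonneg _)
    _ = B * 4 := by rw [intervalIntegral.integral_const_mul, habs4]
    _ < r * 4 := by nlinarith
    _ = 2 * (M - m) := by rw [hr]; ring
end

section
/- Suppose f : ℝ → ℝ is continuous, F(x) = ∫₀ˣ f(s) ds has finite limits F(∞) = lim_{x→∞} F(x) and F(−∞) = lim_{x→−∞} F(x), and F(−∞) < F(x) < F(∞) for all x. If x : ℝ → ℝ is a C² 2π-periodic solution of x'' + f(x)x' + n²x = e(t), where e is continuous and 2π-periodic and n ≥ 1 is an integer, then √(Aₙ² + Bₙ²) < 2n(F(∞) − F(−∞)), where Aₙ = ∫₀^{2π} e(t) cos(nt) dt and Bₙ = ∫₀^{2π} e(t) sin(nt) dt. -/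
open Real MeasureTheory intervalIntegral

private lemma hdcos' (n : ℝ) (t : ℝ) : HasDerivAt (fun t => Real.cos (n*t)) (-Real.sin (n*t) * n) t :=
  (((hasDerivAt_id t).const_mul n).congr_deriv (by simp)).cos

private lemma hdsin' (n : ℝ) (t : ℝ) : HasDerivAt (fun t => Real.sin (n*t)) (Real.cos (n*t) * n) t :=
  (((hasDerivAt_id t).const_mul n).congr_deriv (by simp)).sin

private lemma ibp' (g w g' w' : ℝ → ℝ) (hg : ∀ t, HasDerivAt g (g' t) t)
    (hw : ∀ t, HasDerivAt w (w' t) t) (hg' : Continuous g') (hw' : Continuous w')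
    (hb : g (2*π) * w (2*π) = g 0 * w 0) :
    ∫ t in (0:ℝ)..(2*π), g t * w' t = - ∫ t in (0:ℝ)..(2*π), g' t * w t := by
  rw [intervalIntegral.integral_mul_deriv_eq_deriv_mul (fun t _ => hg t) (fun t _ => hw t)
      (hg'.intervalIntegrable _ _) (hw'.intervalIntegrable _ _), hb]
  ring

private lemma abs_sin_int' (φ : ℝ) (n : ℕ) (hn : 1 ≤ n) :
    ∫ t in (0:ℝ)..(2*π), |Real.sin ((n:ℝ)*t - φ)| = 4 := by
  have hn0 : (n:ℝ) ≠ 0 := by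
    have : (0:ℝ) < n := by exact_mod_cast hn
    linarith
  have hc : Continuous fun u : ℝ => |Real.sin (u - φ)| :=
    (Real.continuous_sin.comp (continuous_id.sub continuous_const)).abs
  have hper : Function.Periodic (fun u : ℝ => |Real.sin (u - φ)|) π := by
    intro u
    simp only []
    rw [show u + π - φ = (u - φ) + π by ring, Real.sin_add_pi, abs_neg]
  have h1 : (∫ t in (0:ℝ)..(2*π), |Real.sin ((n:ℝ)*t - φ)|)
      = (n:ℝ)⁻¹ • ∫ u in ((n:ℝ)*0)..((n:ℝ)*(2*π)), |Real.sin (u - φ)| :=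
    intervalIntegral.integral_comp_mul_left (fun u => |Real.sin (u - φ)|) hn0
  have h2 : (∫ u in (0:ℝ)..((0:ℝ) + (2*n : ℤ) • π), |Real.sin (u - φ)|)
      = (2*n : ℤ) • ∫ u in (0:ℝ)..((0:ℝ) + π), |Real.sin (u - φ)| :=
    hper.intervalIntegral_add_zsmul_eq (2*n) 0 (fun t₁ t₂ => hc.intervalIntegrable _ _)
  have h3 : (∫ u in (0:ℝ)..π, |Real.sin (u - φ)|) = ∫ v in (-φ)..(-φ + π), |Real.sin v| := by
    rw [intervalIntegral.integral_comp_sub_right (fun v => |Real.sin v|) φ]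
    norm_num [sub_eq_neg_add, add_comm]
  have hperS : Function.Periodic (fun v : ℝ => |Real.sin v|) π := fun v => by
    show |Real.sin (v + π)| = |Real.sin v|
    rw [Real.sin_add_pi, abs_neg]
  have h4 : (∫ v in (-φ)..(-φ + π), |Real.sin v|) = ∫ v in (0:ℝ)..((0:ℝ)+π), |Real.sin v| :=
    hperS.intervalIntegral_add_eq (-φ) 0
  have h5 : (∫ v in (0:ℝ)..π, |Real.sin v|) = 2 := by
    rw [show (∫ v in (0:ℝ)..π, |Real.sin v|) = ∫ v in (0:ℝ)..π, Real.sin v from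
      intervalIntegral.integral_congr (fun v hv => by
        rw [Set.uIcc_of_le Real.pi_nonneg] at hv
        exact abs_of_nonneg (Real.sin_nonneg_of_mem_Icc hv))]
    simp [integral_sin]
    norm_num
  have e1 : (n:ℝ) * 0 = (0:ℝ) := by ring
  have e2 : (n:ℝ) * (2*π) = (0:ℝ) + (2*n : ℤ) • π := by rw [zsmul_eq_mul]; push_cast; ring
  rw [h1, e1, e2, h2]
  rw [show (0:ℝ) + π = π by ring] at *
  rw [h3, h4, h5, zsmul_eq_mul]
  push_cast
  field_simp
  ring_nf
  simp [hn0]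

set_option maxHeartbeats 2000000 in
theorem stmt4 (f e : ℝ → ℝ) (hf : Continuous f) (he : Continuous e)
    (heper : Function.Periodic e (2 * π)) (n : ℕ) (hn : 1 ≤ n)
    (F : ℝ → ℝ) (hF : ∀ x : ℝ, F x = ∫ s in (0:ℝ)..x, f s)
    (Fp Fm : ℝ)
    (hFp : Filter.Tendsto F Filter.atTop (nhds Fp))
    (hFm : Filter.Tendsto F Filter.atBot (nhds Fm))
    (hFbound : ∀ x : ℝ, Fm < F x ∧ F x < Fp)
    (x : ℝ → ℝ) (hx : ContDiff ℝ 2 x) (hxper : Function.Periodic x (2 * π))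
    (hode : ∀ t : ℝ, deriv (deriv x) t + f (x t) * deriv x t + (n : ℝ)^2 * x t = e t) :
    Real.sqrt ((∫ t in (0:ℝ)..(2 * π), e t * Real.cos (n * t))^2 +
               (∫ t in (0:ℝ)..(2 * π), e t * Real.sin (n * t))^2)
      < 2 * n * (Fp - Fm) := by
  have hπ : (0:ℝ) < π := Real.pi_pos
  have hnpos : (0:ℝ) < n := by exact_mod_cast hn
  have hn0 : (n:ℝ) ≠ 0 := ne_of_gt hnpos
  -- smoothness facts
  have h2 : ContDiff ℝ (1+1) x := by norm_num; exact hx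
  have hx1 : ContDiff ℝ 1 (deriv x) := (contDiff_succ_iff_deriv.mp h2).2.2
  have hdx : Differentiable ℝ x := hx.differentiable (by norm_num)
  have hdx' : Differentiable ℝ (deriv x) := hx1.differentiable (by norm_num)
  have cx : Continuous x := hdx.continuous
  have cx' : Continuous (deriv x) := hdx'.continuous
  have cx'' : Continuous (deriv (deriv x)) := hx1.continuous_deriv le_rfl
  have hFd : ∀ y, HasDerivAt F (f y) y := by
    intro y
    have hFeq : F = fun u => ∫ s in (0:ℝ)..u, f s := funext hF
    rw [hFeq]
    exact intervalIntegral.integral_hasDerivAt_right (hf.intervalIntegrable _ _)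
      (hf.stronglyMeasurableAtFilter _ _) hf.continuousAt
  have cF : Continuous F := (Differentiable.continuous fun y => (hFd y).differentiableAt)
  -- boundary values
  have hxb : x (2*π) = x 0 := by simpa using hxper 0
  have hx'per : ∀ t, deriv x (t + 2*π) = deriv x t := by
    intro t
    conv_rhs => rw [← funext_iff.mpr hxper]
    rw [deriv_comp_add_const]
  have hx'b : deriv x (2*π) = deriv x 0 := by simpa using hx'per 0
  have hcosb : Real.cos ((n:ℝ)*(2*π)) = 1 := Real.cos_nat_mul_two_pi n
  have hsinb : Real.sin ((n:ℝ)*(2*π)) = 0 := by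
    rw [show (n:ℝ)*(2*π) = ((2*n : ℕ):ℝ)*π by push_cast; ring]
    exact Real.sin_nat_mul_pi _
  set c0 : ℝ := (Fp + Fm)/2 with hc0
  set G : ℝ → ℝ := fun t => F (x t) - c0 with hGdef
  have cFc : Continuous fun t => F (x t) := cF.comp cx
  have cG : Continuous G := cFc.sub continuous_const
  have hFx : ∀ t, HasDerivAt (fun t => F (x t)) (f (x t) * deriv x t) t := by
    intro t
    have := (hFd (x t)).comp t (hdx t).hasDerivAt
    simpa [Function.comp_def] using this
  -- continuity of building blocks
  have ccos : Continuous fun t : ℝ => Real.cos ((n:ℝ)*t) :=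
    Real.continuous_cos.comp (continuous_const.mul continuous_id)
  have csin : Continuous fun t : ℝ => Real.sin ((n:ℝ)*t) :=
    Real.continuous_sin.comp (continuous_const.mul continuous_id)
  have cfx : Continuous fun t => f (x t) * deriv x t := (hf.comp cx).mul cx'
  -- elementary integrals
  have hsin0 : (∫ t in (0:ℝ)..(2*π), Real.sin ((n:ℝ)*t)) = 0 := by
    rw [intervalIntegral.integral_comp_mul_left Real.sin hn0]
    simp [integral_sin, hcosb, mul_zero]
  have hcos0 : (∫ t in (0:ℝ)..(2*π), Real.cos ((n:ℝ)*t)) = 0 := by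
    rw [intervalIntegral.integral_comp_mul_left Real.cos hn0]
    simp [integral_cos, hsinb, mul_zero]
  -- integration by parts identities
  have e_sx' : (∫ t in (0:ℝ)..(2*π), Real.sin ((n:ℝ)*t) * deriv x t)
      = -((n:ℝ) * ∫ t in (0:ℝ)..(2*π), Real.cos ((n:ℝ)*t) * x t) := by
    rw [ibp' (fun t => Real.sin ((n:ℝ)*t)) x (fun t => Real.cos ((n:ℝ)*t) * (n:ℝ)) (deriv x)
      (fun t => hdsin' n t) (fun t => (hdx t).hasDerivAt) (ccos.mul continuous_const) cx'
      (by simp [hsinb, hxb, mul_zero]), neg_inj, ← intervalIntegral.integral_const_mul]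
    exact intervalIntegral.integral_congr fun t _ => by ring
  have e_cx' : (∫ t in (0:ℝ)..(2*π), Real.cos ((n:ℝ)*t) * deriv x t)
      = (n:ℝ) * ∫ t in (0:ℝ)..(2*π), Real.sin ((n:ℝ)*t) * x t := by
    rw [ibp' (fun t => Real.cos ((n:ℝ)*t)) x (fun t => -Real.sin ((n:ℝ)*t) * (n:ℝ)) (deriv x)
      (fun t => hdcos' n t) (fun t => (hdx t).hasDerivAt) ((csin.neg).mul continuous_const) cx'
      (by simp [hcosb, hxb, mul_zero]), ← intervalIntegral.integral_const_mul, ← intervalIntegral.integral_neg]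
    exact intervalIntegral.integral_congr fun t _ => by ring
  have e_cx'' : (∫ t in (0:ℝ)..(2*π), Real.cos ((n:ℝ)*t) * deriv (deriv x) t)
      = (n:ℝ) * ∫ t in (0:ℝ)..(2*π), Real.sin ((n:ℝ)*t) * deriv x t := by
    rw [ibp' (fun t => Real.cos ((n:ℝ)*t)) (deriv x) (fun t => -Real.sin ((n:ℝ)*t) * (n:ℝ))
      (deriv (deriv x)) (fun t => hdcos' n t) (fun t => (hdx' t).hasDerivAt)
      ((csin.neg).mul continuous_const) cx'' (by simp [hcosb, hx'b, mul_zero]),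
      ← intervalIntegral.integral_const_mul, ← intervalIntegral.integral_neg]
    exact intervalIntegral.integral_congr fun t _ => by ring
  have e_sx'' : (∫ t in (0:ℝ)..(2*π), Real.sin ((n:ℝ)*t) * deriv (deriv x) t)
      = -((n:ℝ) * ∫ t in (0:ℝ)..(2*π), Real.cos ((n:ℝ)*t) * deriv x t) := by
    rw [ibp' (fun t => Real.sin ((n:ℝ)*t)) (deriv x) (fun t => Real.cos ((n:ℝ)*t) * (n:ℝ))
      (deriv (deriv x)) (fun t => hdsin' n t) (fun t => (hdx' t).hasDerivAt)
      (ccos.mul continuous_const) cx'' (by simp [hsinb, hx'b, mul_zero]),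
      neg_inj, ← intervalIntegral.integral_const_mul]
    exact intervalIntegral.integral_congr fun t _ => by ring
  have e_cF : (∫ t in (0:ℝ)..(2*π), Real.cos ((n:ℝ)*t) * (f (x t) * deriv x t))
      = (n:ℝ) * ∫ t in (0:ℝ)..(2*π), Real.sin ((n:ℝ)*t) * F (x t) := by
    rw [ibp' (fun t => Real.cos ((n:ℝ)*t)) (fun t => F (x t)) (fun t => -Real.sin ((n:ℝ)*t) * (n:ℝ))
      (fun t => f (x t) * deriv x t) (fun t => hdcos' n t) hFx
      ((csin.neg).mul continuous_const) cfx (by simp [hcosb, hxb, mul_zero]),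
      ← intervalIntegral.integral_const_mul, ← intervalIntegral.integral_neg]
    exact intervalIntegral.integral_congr fun t _ => by ring
  have e_sF : (∫ t in (0:ℝ)..(2*π), Real.sin ((n:ℝ)*t) * (f (x t) * deriv x t))
      = -((n:ℝ) * ∫ t in (0:ℝ)..(2*π), Real.cos ((n:ℝ)*t) * F (x t)) := by
    rw [ibp' (fun t => Real.sin ((n:ℝ)*t)) (fun t => F (x t)) (fun t => Real.cos ((n:ℝ)*t) * (n:ℝ))
      (fun t => f (x t) * deriv x t) (fun t => hdsin' n t) hFx
      (ccos.mul continuous_const) cfx (by simp [hsinb, hxb, mul_zero]),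
      neg_inj, ← intervalIntegral.integral_const_mul]
    exact intervalIntegral.integral_congr fun t _ => by ring
  -- replace F by G
  have e_FG_s : (∫ t in (0:ℝ)..(2*π), Real.sin ((n:ℝ)*t) * F (x t))
      = ∫ t in (0:ℝ)..(2*π), Real.sin ((n:ℝ)*t) * G t := by
    have h : (∫ t in (0:ℝ)..(2*π), Real.sin ((n:ℝ)*t) * G t)
        = ∫ t in (0:ℝ)..(2*π), (Real.sin ((n:ℝ)*t) * F (x t) - c0 * Real.sin ((n:ℝ)*t)) :=
      intervalIntegral.integral_congr fun t _ => by simp only [hGdef]; ring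
    rw [h, intervalIntegral.integral_sub ((csin.fun_mul cFc).intervalIntegrable _ _)
      ((continuous_const.fun_mul csin).intervalIntegrable _ _),
      intervalIntegral.integral_const_mul, hsin0]
    ring
  have e_FG_c : (∫ t in (0:ℝ)..(2*π), Real.cos ((n:ℝ)*t) * F (x t))
      = ∫ t in (0:ℝ)..(2*π), Real.cos ((n:ℝ)*t) * G t := by
    have h : (∫ t in (0:ℝ)..(2*π), Real.cos ((n:ℝ)*t) * G t)
        = ∫ t in (0:ℝ)..(2*π), (Real.cos ((n:ℝ)*t) * F (x t) - c0 * Real.cos ((n:ℝ)*t)) :=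
      intervalIntegral.integral_congr fun t _ => by simp only [hGdef]; ring
    rw [h, intervalIntegral.integral_sub ((ccos.fun_mul cFc).intervalIntegrable _ _)
      ((continuous_const.fun_mul ccos).intervalIntegrable _ _),
      intervalIntegral.integral_const_mul, hcos0]
    ring
  -- splitting of e
  have hsplitA : (∫ t in (0:ℝ)..(2*π), e t * Real.cos ((n:ℝ)*t))
      = (∫ t in (0:ℝ)..(2*π), Real.cos ((n:ℝ)*t) * deriv (deriv x) t)
        + ((∫ t in (0:ℝ)..(2*π), Real.cos ((n:ℝ)*t) * (f (x t) * deriv x t))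
          + (n:ℝ)^2 * ∫ t in (0:ℝ)..(2*π), Real.cos ((n:ℝ)*t) * x t) := by
    rw [← intervalIntegral.integral_const_mul,
      ← intervalIntegral.integral_add ((ccos.fun_mul cfx).intervalIntegrable _ _)
        ((continuous_const.fun_mul (ccos.fun_mul cx)).intervalIntegrable _ _),
      ← intervalIntegral.integral_add ((ccos.fun_mul cx'').intervalIntegrable _ _)
        (((ccos.fun_mul cfx).fun_add (continuous_const.fun_mul (ccos.fun_mul cx))).intervalIntegrable _ _)]
    exact intervalIntegral.integral_congr fun t _ => by rw [← hode t]; ring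
  have hsplitB : (∫ t in (0:ℝ)..(2*π), e t * Real.sin ((n:ℝ)*t))
      = (∫ t in (0:ℝ)..(2*π), Real.sin ((n:ℝ)*t) * deriv (deriv x) t)
        + ((∫ t in (0:ℝ)..(2*π), Real.sin ((n:ℝ)*t) * (f (x t) * deriv x t))
          + (n:ℝ)^2 * ∫ t in (0:ℝ)..(2*π), Real.sin ((n:ℝ)*t) * x t) := by
    rw [← intervalIntegral.integral_const_mul,
      ← intervalIntegral.integral_add ((csin.fun_mul cfx).intervalIntegrable _ _)
        ((continuous_const.fun_mul (csin.fun_mul cx)).intervalIntegrable _ _),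
      ← intervalIntegral.integral_add ((csin.fun_mul cx'').intervalIntegrable _ _)
        (((csin.fun_mul cfx).fun_add (continuous_const.fun_mul (csin.fun_mul cx))).intervalIntegrable _ _)]
    exact intervalIntegral.integral_congr fun t _ => by rw [← hode t]; ring
  -- the two Fourier coefficient identities
  have hA : (∫ t in (0:ℝ)..(2*π), e t * Real.cos ((n:ℝ)*t))
      = (n:ℝ) * ∫ t in (0:ℝ)..(2*π), Real.sin ((n:ℝ)*t) * G t := by
    rw [hsplitA, e_cx'', e_sx', e_cF, e_FG_s]
    ring
  have hB : (∫ t in (0:ℝ)..(2*π), e t * Real.sin ((n:ℝ)*t))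
      = -((n:ℝ) * ∫ t in (0:ℝ)..(2*π), Real.cos ((n:ℝ)*t) * G t) := by
    rw [hsplitB, e_sx'', e_cx', e_sF, e_FG_c]
    ring
  -- the maximum of |G|
  obtain ⟨t0, ht0mem, ht0⟩ := (isCompact_Icc (a := (0:ℝ)) (b := 2*π)).exists_isMaxOn
    (Set.nonempty_Icc.mpr (by positivity)) (cG.abs.continuousOn)
  set M : ℝ := |G t0| with hMdef
  have hM : ∀ t ∈ Set.Icc (0:ℝ) (2*π), |G t| ≤ M := fun t ht => ht0 ht
  have hMnonneg : 0 ≤ M := abs_nonneg _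
  have hMlt : M < (Fp - Fm)/2 := by
    have h1 := (hFbound (x t0)).1
    have h2 := (hFbound (x t0)).2
    rw [hMdef, hGdef]
    simp only []
    rw [abs_lt]
    constructor <;> [skip; skip] <;> simp only [hc0] <;> linarith
  have hFpFm : 0 < Fp - Fm := by
    have h1 := (hFbound 0).1
    have h2 := (hFbound 0).2
    linarith
  -- abbreviations
  set A : ℝ := ∫ t in (0:ℝ)..(2*π), e t * Real.cos ((n:ℝ)*t) with hAdef
  set B : ℝ := ∫ t in (0:ℝ)..(2*π), e t * Real.sin ((n:ℝ)*t) with hBdef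
  by_cases h0 : A = 0 ∧ B = 0
  · rw [h0.1, h0.2]
    norm_num
    linarith [mul_pos hnpos hFpFm]
  · have hRR : 0 < A^2 + B^2 := by
      rcases not_and_or.mp h0 with h | h
      · have := pow_two_pos_of_ne_zero h
        linarith [sq_nonneg B]
      · have := pow_two_pos_of_ne_zero h
        linarith [sq_nonneg A]
    set R : ℝ := Real.sqrt (A^2 + B^2) with hRdef
    have hR : 0 < R := Real.sqrt_pos.mpr hRR
    have hR2 : R^2 = A^2 + B^2 := Real.sq_sqrt hRR.le
    set a : ℝ := A/R with hadef
    set b : ℝ := B/R with hbdef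
    set z : ℂ := ⟨a, b⟩ with hzdef
    have habs : ‖z‖ = 1 := by
      rw [Complex.norm_def, Complex.normSq_mk]
      have h : a*a + b*b = 1 := by
        rw [hadef, hbdef]
        field_simp
        linear_combination -hR2
      rw [h, Real.sqrt_one]
    have hz0 : z ≠ 0 := by
      intro h
      rw [h] at habs
      simp at habs
    set φ : ℝ := Complex.arg z with hφdef
    have hφc : Real.cos φ = a := by
      rw [hφdef, Complex.cos_arg hz0, habs]
      simp [hzdef]
    have hφs : Real.sin φ = b := by
      rw [hφdef, Complex.sin_arg, habs]
      simp [hzdef]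
    -- the combined integral
    have h2' : (∫ t in (0:ℝ)..(2*π), G t * Real.sin ((n:ℝ)*t - φ))
        = (∫ t in (0:ℝ)..(2*π), Real.sin ((n:ℝ)*t) * G t) * Real.cos φ
          - (∫ t in (0:ℝ)..(2*π), Real.cos ((n:ℝ)*t) * G t) * Real.sin φ := by
      rw [← intervalIntegral.integral_mul_const, ← intervalIntegral.integral_mul_const,
        ← intervalIntegral.integral_sub (((csin.fun_mul cG).fun_mul continuous_const).intervalIntegrable _ _)
          (((ccos.fun_mul cG).fun_mul continuous_const).intervalIntegrable _ _)]
      exact intervalIntegral.integral_congr fun t _ => by rw [Real.sin_sub]; ring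
    have hcomb : R = (n:ℝ) * ∫ t in (0:ℝ)..(2*π), G t * Real.sin ((n:ℝ)*t - φ) := by
      have h1 : A * a + B * b = R := by
        rw [hadef, hbdef]
        field_simp
        linear_combination -hR2
      rw [← h1, h2', hφc, hφs, hA, hB]
      ring
    -- the bound
    have csφ : Continuous fun t : ℝ => Real.sin ((n:ℝ)*t - φ) :=
      Real.continuous_sin.comp ((continuous_const.mul continuous_id).sub continuous_const)
    have hint : (∫ t in (0:ℝ)..(2*π), G t * Real.sin ((n:ℝ)*t - φ))
        ≤ ∫ t in (0:ℝ)..(2*π), M * |Real.sin ((n:ℝ)*t - φ)| := by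
      apply intervalIntegral.integral_mono_on (by positivity)
        ((cG.mul csφ).intervalIntegrable _ _)
        ((continuous_const.mul csφ.abs).intervalIntegrable _ _)
      intro t ht
      calc G t * Real.sin ((n:ℝ)*t - φ) ≤ |G t * Real.sin ((n:ℝ)*t - φ)| := le_abs_self _
        _ = |G t| * |Real.sin ((n:ℝ)*t - φ)| := abs_mul _ _
        _ ≤ M * |Real.sin ((n:ℝ)*t - φ)| :=
            mul_le_mul_of_nonneg_right (hM t ht) (abs_nonneg _)
    have hint4 : (∫ t in (0:ℝ)..(2*π), M * |Real.sin ((n:ℝ)*t - φ)|) = M * 4 := by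
      rw [intervalIntegral.integral_const_mul, abs_sin_int' φ n hn]
    have hfinal : R ≤ (n:ℝ) * (M * 4) := by
      rw [hcomb]
      apply mul_le_mul_of_nonneg_left _ hnpos.le
      rw [← hint4]
      exact hint
    have hlast : (n:ℝ) * (M * 4) < 2 * n * (Fp - Fm) := by
      have h := mul_lt_mul_of_pos_left hMlt hnpos
      linarith
    calc R ≤ (n:ℝ) * (M * 4) := hfinal
      _ < 2 * n * (Fp - Fm) := hlast
end

section
/- If g : ℝ → ℝ is continuous with m < g(s) < M for all s (m, M finite) and x : [0, π] → ℝ is continuous, then |∫₀^π g(x(t)) cos t dt| < M − m. -/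
open Real MeasureTheory intervalIntegral

theorem stmt10 (g : ℝ → ℝ) (hg : Continuous g) (m M : ℝ)
    (hbound : ∀ s : ℝ, m < g s ∧ g s < M)
    (x : ℝ → ℝ) (hx : ContinuousOn x (Set.Icc 0 π)) :
    |∫ t in (0:ℝ)..π, g (x t) * Real.cos t| < M - m := by
  have hπ : (0:ℝ) < π := Real.pi_pos
  have hgx : ContinuousOn (fun t => g (x t)) (Set.Icc 0 π) := hg.comp_continuousOn hx
  obtain ⟨a, ha, hmax⟩ := isCompact_Icc.exists_isMaxOn (Set.nonempty_Icc.2 hπ.le) hgx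
  obtain ⟨b, hb, hmin⟩ := isCompact_Icc.exists_isMinOn (Set.nonempty_Icc.2 hπ.le) hgx
  set M' := g (x a) with hM'def
  set m' := g (x b) with hm'def
  have hM' : M' < M := (hbound (x a)).2
  have hm' : m < m' := (hbound (x b)).1
  have hsub1 : Set.Icc (0:ℝ) (π/2) ⊆ Set.Icc 0 π :=
    Set.Icc_subset_Icc le_rfl (by linarith)
  have hsub2 : Set.Icc (π/2) π ⊆ Set.Icc 0 π :=
    Set.Icc_subset_Icc (by positivity) le_rfl
  have contf : ContinuousOn (fun t => g (x t) * Real.cos t) (Set.Icc 0 π) :=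
    hgx.mul Real.continuous_cos.continuousOn
  have int1 : IntervalIntegrable (fun t => g (x t) * Real.cos t) volume 0 (π/2) := by
    apply ContinuousOn.intervalIntegrable
    rw [Set.uIcc_of_le (by positivity)]
    exact contf.mono hsub1
  have int2 : IntervalIntegrable (fun t => g (x t) * Real.cos t) volume (π/2) π := by
    apply ContinuousOn.intervalIntegrable
    rw [Set.uIcc_of_le (by linarith)]
    exact contf.mono hsub2
  have intc1 : ∀ c : ℝ, IntervalIntegrable (fun t => c * Real.cos t) volume 0 (π/2) :=
    fun c => (continuous_const.mul Real.continuous_cos).intervalIntegrable _ _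
  have intc2 : ∀ c : ℝ, IntervalIntegrable (fun t => c * Real.cos t) volume (π/2) π :=
    fun c => (continuous_const.mul Real.continuous_cos).intervalIntegrable _ _
  have hcval1 : ∀ c : ℝ, (∫ t in (0:ℝ)..(π/2), c * Real.cos t) = c := by
    intro c
    rw [intervalIntegral.integral_const_mul, integral_cos]
    simp
  have hcval2 : ∀ c : ℝ, (∫ t in (π/2:ℝ)..π, c * Real.cos t) = -c := by
    intro c
    rw [intervalIntegral.integral_const_mul, integral_cos]
    simp
  have hcos1 : ∀ t ∈ Set.Icc (0:ℝ) (π/2), 0 ≤ Real.cos t := by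
    intro t ht
    exact Real.cos_nonneg_of_mem_Icc ⟨by linarith [ht.1], ht.2⟩
  have hcos2 : ∀ t ∈ Set.Icc (π/2:ℝ) π, Real.cos t ≤ 0 := by
    intro t ht
    exact Real.cos_nonpos_of_pi_div_two_le_of_le ht.1 (by linarith [ht.2])
  have h1u : (∫ t in (0:ℝ)..(π/2), g (x t) * Real.cos t) ≤ M' := by
    calc (∫ t in (0:ℝ)..(π/2), g (x t) * Real.cos t)
        ≤ ∫ t in (0:ℝ)..(π/2), M' * Real.cos t := by
          apply intervalIntegral.integral_mono_on (by positivity) int1 (intc1 M')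
          intro t ht
          exact mul_le_mul_of_nonneg_right (hmax (hsub1 ht)) (hcos1 t ht)
      _ = M' := hcval1 M'
  have h1l : m' ≤ (∫ t in (0:ℝ)..(π/2), g (x t) * Real.cos t) := by
    calc m' = ∫ t in (0:ℝ)..(π/2), m' * Real.cos t := (hcval1 m').symm
      _ ≤ _ := by
          apply intervalIntegral.integral_mono_on (by positivity) (intc1 m') int1
          intro t ht
          exact mul_le_mul_of_nonneg_right (hmin (hsub1 ht)) (hcos1 t ht)
  have h2u : (∫ t in (π/2:ℝ)..π, g (x t) * Real.cos t) ≤ -m' := by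
    calc (∫ t in (π/2:ℝ)..π, g (x t) * Real.cos t)
        ≤ ∫ t in (π/2:ℝ)..π, m' * Real.cos t := by
          apply intervalIntegral.integral_mono_on (by linarith) int2 (intc2 m')
          intro t ht
          exact mul_le_mul_of_nonpos_right (hmin (hsub2 ht)) (hcos2 t ht)
      _ = -m' := hcval2 m'
  have h2l : -M' ≤ (∫ t in (π/2:ℝ)..π, g (x t) * Real.cos t) := by
    calc -M' = ∫ t in (π/2:ℝ)..π, M' * Real.cos t := (hcval2 M').symm
      _ ≤ _ := by
          apply intervalIntegral.integral_mono_on (by linarith) (intc2 M') int2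
          intro t ht
          exact mul_le_mul_of_nonpos_right (hmax (hsub2 ht)) (hcos2 t ht)
  have hsplit : (∫ t in (0:ℝ)..π, g (x t) * Real.cos t)
      = (∫ t in (0:ℝ)..(π/2), g (x t) * Real.cos t)
        + ∫ t in (π/2:ℝ)..π, g (x t) * Real.cos t :=
    (intervalIntegral.integral_add_adjacent_intervals int1 int2).symm
  rw [hsplit, abs_lt]
  constructor <;> nlinarith [h1u, h1l, h2u, h2l, hM', hm']
end
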